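/- arXiv:1308.4881 — 4 statements merged into one kernel-verified Lean document; each statement's English description precedes it below -/
import Mathlib

section
/- Let −2 ≤ α ≤ 0 and x ∈ [0,1). Then x(1 − x − αx) − (1−x)φ(x) ≥ 0. -/
open Real Set

/-- `φ(x) = ∫₀ˣ (1-t)^α dt`. -/
noncomputable def phi (α : ℝ) (x : ℝ) : ℝ := ∫ t in (0 : ℝ)..x, (1 - t) ^ α

/-! Writing `s = 1 - t`, weighted AM–GM applied to `1` and `s²` with weights `-α/2` and
`(α+2)/2` gives `s^(α+2) ≤ -α + (α+1) s²`, i.e. `(1-t)^α ≤ -α (1-t)⁻² + (α+1)` on `[0, 1)`.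
Integrating over `[0, x]` yields `φ(x) ≤ -α x/(1-x) + (α+1) x`, and multiplying by `1 - x`
turns the right-hand side into exactly `x(1 - x - αx)`. -/

theorem rpow_le_neg_mul_inv_sq_add {α s : ℝ} (hα₁ : -2 ≤ α) (hα₂ : α ≤ 0) (hs₀ : 0 < s)
    (hs₁ : s ≤ 1) : s ^ α ≤ -α * (s ^ 2)⁻¹ + (α + 1) := by
  have hsq : 0 < s ^ 2 := by positivity
  have amgm : s ^ α * s ^ 2 ≤ -α / 2 * 1 + (α + 2) / 2 * s ^ 2 := by
    have h := geom_mean_le_arith_mean2_weighted (p₁ := 1) (p₂ := s ^ 2) (by linarith)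
      (by linarith) zero_le_one hsq.le (by ring : -α / 2 + (α + 2) / 2 = 1)
    have hpow : (s ^ 2) ^ ((α + 2) / 2) = s ^ α * s ^ 2 := by
      rw [← rpow_two, ← rpow_mul hs₀.le, mul_div_cancel₀ _ two_ne_zero, rpow_add hs₀]
    rwa [one_rpow, one_mul, hpow] at h
  rw [← le_div_iff₀ hsq] at amgm
  calc s ^ α ≤ (-α / 2 * 1 + (α + 2) / 2 * s ^ 2) / s ^ 2 := amgm
    _ ≤ -α * (s ^ 2)⁻¹ + (α + 1) := by
      rw [div_le_iff₀ hsq, add_mul, mul_assoc, inv_mul_cancel₀ hsq.ne']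
      nlinarith [mul_nonneg (neg_nonneg.2 hα₂) (sub_nonneg.2 (pow_le_one₀ hs₀.le hs₁ (n := 2)))]

theorem integral_inv_one_sub_sq {a b : ℝ} (ha : a < 1) (hb : b < 1) :
    ∫ t in a..b, ((1 - t) ^ 2)⁻¹ = (1 - b)⁻¹ - (1 - a)⁻¹ := by
  have hpos : ∀ t ∈ uIcc a b, 0 < 1 - t := fun t ht =>
    sub_pos.2 ((le_max_iff.1 ht.2).elim (·.trans_lt ha) (·.trans_lt hb))
  refine intervalIntegral.integral_eq_sub_of_hasDerivAt (f := fun t => (1 - t)⁻¹)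
    (fun t ht => ?_) ?_
  · simpa using ((hasDerivAt_id t).const_sub 1).fun_inv (hpos t ht).ne'
  · exact (ContinuousOn.inv₀ (by fun_prop)
      fun t ht => (pow_pos (hpos t ht) 2).ne').intervalIntegrable

theorem phi_le {α x : ℝ} (hα₁ : -2 ≤ α) (hα₂ : α ≤ 0) (hx₀ : 0 ≤ x) (hx₁ : x < 1) :
    phi α x ≤ -α * ((1 - x)⁻¹ - 1) + (α + 1) * x := by
  have hpos : ∀ t ∈ uIcc 0 x, 0 < 1 - t := fun t ht => by
    rw [uIcc_of_le hx₀] at ht; linarith [ht.2]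
  have hbound : IntervalIntegrable (fun t => ((1 - t) ^ 2)⁻¹) MeasureTheory.volume 0 x :=
    (ContinuousOn.inv₀ (by fun_prop) fun t ht => (pow_pos (hpos t ht) 2).ne').intervalIntegrable
  calc phi α x ≤ ∫ t in (0 : ℝ)..x, (-α * ((1 - t) ^ 2)⁻¹ + (α + 1)) := by
        refine intervalIntegral.integral_mono_on hx₀ ?_ ?_ fun t ht => ?_
        · exact (ContinuousOn.rpow_const (by fun_prop)
            fun t ht => Or.inl (hpos t ht).ne').intervalIntegrable
        · exact (hbound.const_mul _).add intervalIntegrable_const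
        · exact rpow_le_neg_mul_inv_sq_add hα₁ hα₂ (by linarith [ht.2]) (by linarith [ht.1])
    _ = -α * ((1 - x)⁻¹ - 1) + (α + 1) * x := by
        rw [intervalIntegral.integral_add (hbound.const_mul _) intervalIntegrable_const,
          intervalIntegral.integral_const_mul, integral_inv_one_sub_sq zero_lt_one hx₁,
          intervalIntegral.integral_const, sub_zero, sub_zero, inv_one, smul_eq_mul, mul_comm x]

/-- For `-2 ≤ α ≤ 0` and `x ∈ [0,1)`, `x(1 - x - αx) - (1-x)φ(x) ≥ 0`. -/
theorem g1_nonneg (α : ℝ) (hα₁ : -2 ≤ α) (hα₂ : α ≤ 0)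
    (x : ℝ) (hx : x ∈ Ico (0 : ℝ) 1) :
    0 ≤ x * (1 - x - α * x) - (1 - x) * phi α x := by
  obtain ⟨hx₀, hx₁⟩ := hx
  have hexpand : (1 - x) * (-α * ((1 - x)⁻¹ - 1) + (α + 1) * x) = x * (1 - x - α * x) := by
    field_simp [(sub_pos.2 hx₁).ne']
    ring
  rw [sub_nonneg, ← hexpand]
  exact mul_le_mul_of_nonneg_left (phi_le hα₁ hα₂ hx₀ hx₁) (sub_nonneg.2 hx₁.le)
end

section
/- Let −2 ≤ α ≤ 0 and x ∈ [0,1). Then (α+2)φ(x)² − 2(1 + x + αx)φ(x) + 2x ≥ 0. -/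
/-!
Write `g(x)` for the left-hand side. Then `g(0) = 0` and `g' = 2F` with
`F = (α+2) φ (1-x)^α - (α+1) φ - (1 + (α+1) x) (1-x)^α + 1`; again `F(0) = 0`, and
`F' = (1-x)^(α-1) K` with `K` affine in `φ`. So it suffices that `K ≥ 0`. For `α = -1`, `K = φ`.
Otherwise `φ = (1 - s^β)/β` with `s = 1 - x`, `β = α + 1`, and
`β² K = (β + 1) · β ((2β - 1) s^β + (β - 1)² - β² s)`, where the bracket has the sign of `β`
by Bernoulli's inequality for `s^β`.
-/

open Real Set

lemma nonneg_of_hasDerivAt_nonneg {f f' : ℝ → ℝ} {x : ℝ} (hx : 0 ≤ x) (hf₀ : f 0 = 0)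
    (hf : ∀ y ∈ Icc 0 x, HasDerivAt f (f' y) y) (hf' : ∀ y ∈ Ioo 0 x, 0 ≤ f' y) : 0 ≤ f x := by
  have hmono : MonotoneOn f (Icc 0 x) :=
    monotoneOn_of_hasDerivWithinAt_nonneg (convex_Icc 0 x)
      (fun y hy ↦ (hf y hy).continuousAt.continuousWithinAt)
      (fun y hy ↦ (hf y (interior_subset hy)).hasDerivWithinAt)
      (fun y hy ↦ hf' y (by rwa [interior_Icc] at hy))
  simpa [hf₀] using hmono (left_mem_Icc.2 hx) (right_mem_Icc.2 hx) hx

lemma one_add_mul_sub_one_le_rpow_of_nonpos {s β : ℝ} (hs : 0 < s) (hβ : β ≤ 0) :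
    1 + β * (s - 1) ≤ s ^ β :=
  calc 1 + β * (s - 1) ≤ log s * β + 1 := by
        nlinarith [mul_le_mul_of_nonpos_left (log_le_sub_one_of_pos hs) hβ]
    _ ≤ exp (log s * β) := add_one_le_exp _
    _ = s ^ β := (rpow_def_of_pos hs β).symm

lemma rpow_le_one_add_mul_sub_one {s β : ℝ} (hs : 0 ≤ s) (hβ₀ : 0 ≤ β) (hβ₁ : β ≤ 1) :
    s ^ β ≤ 1 + β * (s - 1) := by
  simpa using rpow_one_add_le_one_add_mul_self (s := s - 1) (by linarith) hβ₀ hβ₁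

/-- Once `s ^ β` is replaced by its Bernoulli bound (or by `s ≤ s ^ β` when `2β > 1`),
the bracket becomes `(1 - s) β (1 - β)` or `(1 - s) (1 - β) ^ 2`. -/
lemma mul_rpow_combination_nonneg {s β : ℝ} (hs₀ : 0 < s) (hs₁ : s ≤ 1) (hβ : β ≤ 1) :
    0 ≤ β * ((2 * β - 1) * s ^ β + (β - 1) ^ 2 - β ^ 2 * s) := by
  rcases le_or_gt β 0 with hβ₀ | hβ₀
  · have hb := one_add_mul_sub_one_le_rpow_of_nonpos hs₀ hβ₀
    have h := mul_le_mul_of_nonpos_left hb (by linarith : 2 * β - 1 ≤ 0)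
    refine mul_nonneg_of_nonpos_of_nonpos hβ₀ ?_
    nlinarith [mul_nonneg (mul_nonneg (neg_nonneg.2 hβ₀) (by linarith : (0 : ℝ) ≤ 1 - β))
      (by linarith : (0 : ℝ) ≤ 1 - s)]
  refine mul_nonneg hβ₀.le ?_
  rcases le_or_gt (2 * β) 1 with hβ₂ | hβ₂
  · have hb := rpow_le_one_add_mul_sub_one hs₀.le hβ₀.le hβ
    have h := mul_le_mul_of_nonpos_left hb (by linarith : 2 * β - 1 ≤ 0)
    nlinarith [mul_nonneg (mul_nonneg hβ₀.le (by linarith : (0 : ℝ) ≤ 1 - β))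
      (by linarith : (0 : ℝ) ≤ 1 - s)]
  · have hb : s ≤ s ^ β := by
      simpa using rpow_le_rpow_of_exponent_ge hs₀ hs₁ hβ
    have h := mul_le_mul_of_nonneg_left hb (by linarith : 0 ≤ 2 * β - 1)
    nlinarith [mul_nonneg (sq_nonneg (β - 1)) (by linarith : (0 : ℝ) ≤ 1 - s)]

lemma continuousAt_one_sub_rpow {α t : ℝ} (ht : t < 1) :
    ContinuousAt (fun t : ℝ ↦ (1 - t) ^ α) t :=
  (continuousAt_const.sub continuousAt_id).rpow_const (Or.inl (sub_ne_zero.2 ht.ne'))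

lemma hasDerivAt_one_sub_rpow {α y : ℝ} (hy : y < 1) :
    HasDerivAt (fun y : ℝ ↦ (1 - y) ^ α) (-1 * α * (1 - y) ^ (α - 1)) y :=
  ((hasDerivAt_id y).const_sub 1).rpow_const (Or.inl (by simp; linarith))

namespace phi

lemma zero (α : ℝ) : phi α 0 = 0 := intervalIntegral.integral_same

lemma nonneg {α x : ℝ} (hx₀ : 0 ≤ x) (hx₁ : x < 1) : 0 ≤ phi α x :=
  intervalIntegral.integral_nonneg hx₀ fun _ ht ↦ rpow_nonneg (by linarith [ht.2]) _

lemma hasDerivAt {α x : ℝ} (hx : x < 1) : HasDerivAt (phi α) ((1 - x) ^ α) x := by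
  have hcont : ContinuousOn (fun t : ℝ ↦ (1 - t) ^ α) (Iio 1) :=
    fun t ht ↦ (continuousAt_one_sub_rpow ht).continuousWithinAt
  refine intervalIntegral.integral_hasDerivAt_right ?_
    (hcont.stronglyMeasurableAtFilter isOpen_Iio x hx) (continuousAt_one_sub_rpow hx)
  refine (hcont.mono fun t ht ↦ ?_).intervalIntegrable
  exact lt_of_le_of_lt ht.2 (max_lt one_pos hx)

lemma eq_div {α x : ℝ} (hα : α ≠ -1) (hx : x < 1) :
    phi α x = (1 - (1 - x) ^ (α + 1)) / (α + 1) := by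
  have h0 : (0 : ℝ) ∉ uIcc (1 - x) 1 := notMem_uIcc_of_lt (by linarith) one_pos
  rw [phi, intervalIntegral.integral_comp_sub_left (fun u : ℝ ↦ u ^ α) 1,
    sub_zero, integral_rpow (Or.inr ⟨hα, h0⟩), one_rpow]

end phi

noncomputable def g2 (α x : ℝ) : ℝ :=
  (α + 2) * (phi α x) ^ 2 - 2 * (1 + x + α * x) * phi α x + 2 * x

noncomputable def g2HalfDeriv (α y : ℝ) : ℝ :=
  (α + 2) * phi α y * (1 - y) ^ α - (α + 1) * phi α y - (1 + (α + 1) * y) * (1 - y) ^ α + 1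

noncomputable def g2HalfDerivFactor (α y : ℝ) : ℝ :=
  (α + 2) * (1 - y) ^ (α + 1) - α * (α + 2) * phi α y - 2 * (α + 1) * (1 - y)
    + α * (1 + (α + 1) * y)

lemma hasDerivAt_g2 (α : ℝ) {y : ℝ} (hy : y < 1) :
    HasDerivAt (g2 α) (2 * g2HalfDeriv α y) y := by
  have hφ := phi.hasDerivAt (α := α) hy
  have hlin : HasDerivAt (fun y : ℝ ↦ 1 + y + α * y) (1 + α) y :=
    (((hasDerivAt_id' y).const_add 1).add ((hasDerivAt_id' y).const_mul α)).congr_deriv (by ring)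
  refine ((((hφ.pow 2).const_mul (α + 2)).sub ((hlin.const_mul 2).mul hφ)).add
    ((hasDerivAt_id' y).const_mul 2)).congr_deriv ?_
  simp only [g2HalfDeriv]
  ring

lemma hasDerivAt_g2HalfDeriv (α : ℝ) {y : ℝ} (hy : y < 1) :
    HasDerivAt (g2HalfDeriv α) ((1 - y) ^ (α - 1) * g2HalfDerivFactor α y) y := by
  have hφ := phi.hasDerivAt (α := α) hy
  have hq := hasDerivAt_one_sub_rpow (α := α) hy
  have hlin : HasDerivAt (fun y : ℝ ↦ 1 + (α + 1) * y) (α + 1) y :=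
    (((hasDerivAt_id' y).const_mul (α + 1)).const_add 1).congr_deriv (mul_one _)
  refine ((((hφ.const_mul (α + 2)).mul hq).sub (hφ.const_mul (α + 1))).sub
    (hlin.mul hq)).add_const 1 |>.congr_deriv ?_
  have hs : 1 - y ≠ 0 := sub_ne_zero.2 hy.ne'
  have e₁ : (1 - y) ^ α = (1 - y) ^ (α - 1) * (1 - y) := by
    rw [← rpow_add_one hs]; ring_nf
  have e₂ : (1 - y) ^ (α + 1) = (1 - y) ^ (α - 1) * (1 - y) * (1 - y) := by
    rw [← rpow_add_one hs, ← rpow_add_one hs]; ring_nf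
  simp only [g2HalfDerivFactor]
  rw [e₁, e₂]
  ring

lemma g2HalfDerivFactor_nonneg {α y : ℝ} (hα₁ : -2 ≤ α) (hα₂ : α ≤ 0) (hy₀ : 0 ≤ y)
    (hy₁ : y < 1) : 0 ≤ g2HalfDerivFactor α y := by
  rcases eq_or_ne α (-1) with rfl | hα
  · norm_num [g2HalfDerivFactor]
    linarith [phi.nonneg (α := -1) hy₀ hy₁]
  have hβ : α + 1 ≠ 0 := fun h ↦ hα (by linarith)
  have key := mul_rpow_combination_nonneg (s := 1 - y) (β := α + 1) (by linarith) (by linarith)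
    (by linarith)
  have hsq : (α + 1) ^ 2 * g2HalfDerivFactor α y = (α + 2) * ((α + 1) *
      ((2 * (α + 1) - 1) * (1 - y) ^ (α + 1) + (α + 1 - 1) ^ 2 - (α + 1) ^ 2 * (1 - y))) := by
    rw [g2HalfDerivFactor, phi.eq_div hα hy₁]
    field_simp
    ring
  exact nonneg_of_mul_nonneg_right (hsq ▸ mul_nonneg (by linarith) key) (by positivity)

lemma g2HalfDeriv_nonneg {α x : ℝ} (hα₁ : -2 ≤ α) (hα₂ : α ≤ 0) (hx₀ : 0 ≤ x) (hx₁ : x < 1) :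
    0 ≤ g2HalfDeriv α x :=
  nonneg_of_hasDerivAt_nonneg hx₀ (by simp [g2HalfDeriv, phi.zero])
    (fun y hy ↦ hasDerivAt_g2HalfDeriv α (by linarith [hy.2]))
    (fun y hy ↦ mul_nonneg (rpow_nonneg (by linarith [hy.2]) _)
      (g2HalfDerivFactor_nonneg hα₁ hα₂ hy.1.le (by linarith [hy.2])))

/-- For `-2 ≤ α ≤ 0` and `x ∈ [0,1)`, `(α+2)φ(x)² - 2(1 + x + αx)φ(x) + 2x ≥ 0`. -/
theorem g2_nonneg (α : ℝ) (hα₁ : -2 ≤ α) (hα₂ : α ≤ 0)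
    (x : ℝ) (hx : x ∈ Ico (0 : ℝ) 1) :
    0 ≤ (α + 2) * (phi α x) ^ 2 - 2 * (1 + x + α * x) * phi α x + 2 * x := by
  obtain ⟨hx₀, hx₁⟩ := hx
  show 0 ≤ g2 α x
  exact nonneg_of_hasDerivAt_nonneg hx₀ (by simp [g2, phi.zero])
    (fun y hy ↦ hasDerivAt_g2 α (by linarith [hy.2]))
    (fun y hy ↦ mul_nonneg zero_le_two (g2HalfDeriv_nonneg hα₁ hα₂ hy.1.le (by linarith [hy.2])))
end

section
/- Let −2 ≤ α ≤ 0 and let M be a positive differentiable function on (0,1) with M′(x) > 0 for all x ∈ (0,1). Then B(x)² − 4A(x)C(x) > 0 for all x ∈ (0,1). -/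
open Real Set

/-- `A(x) = (φ(x) - x)/φ(x)²`. -/
noncomputable def Afun (α : ℝ) (x : ℝ) : ℝ := (phi α x - x) / (phi α x) ^ 2

/-- `B(x) = (1 - x - αx) + x(1-x)M'(x)/M(x)`. -/
noncomputable def Bfun (α : ℝ) (M : ℝ → ℝ) (x : ℝ) : ℝ :=
  (1 - x - α * x) + x * (1 - x) * deriv M x / M x

/-- `C(x) = x(1-x)^{α+1}`. -/
noncomputable def Cfun (α : ℝ) (x : ℝ) : ℝ := x * (1 - x) ^ (α + 1)

/-!
With `b₀ = 1 - x - αx`, integrating `(1-t)^α` exactly gives `b₀ φ = (φ - x) + C`, and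
then `b₀² - 4AC = (b₀ - 2C/φ)²`: without the `M'/M` term of `B` the discriminant is a
perfect square. That term is positive, and so is `b₀` for `α ≤ 0`, hence `B² > b₀² ≥ 4AC`.
-/

lemma add_one_mul_phi (α : ℝ) {x : ℝ} (hx : x < 1) :
    (α + 1) * phi α x = 1 - (1 - x) ^ (α + 1) := by
  rcases eq_or_ne α (-1) with rfl | hα
  · simp
  have h0 : (0 : ℝ) ∉ uIcc (1 - x) 1 := by
    rw [mem_uIcc, not_or]
    constructor <;> intro h <;> linarith [h.1]
  have hsubst : phi α x = ∫ u in (1 - x)..1, u ^ α := by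
    simpa [phi] using
      intervalIntegral.integral_comp_sub_left (a := 0) (b := x) (fun u : ℝ => u ^ α) 1
  have hα' : α + 1 ≠ 0 := fun h => hα (by linarith)
  rw [hsubst, integral_rpow (Or.inr ⟨hα, h0⟩), one_rpow]
  field_simp

lemma one_sub_sub_mul_mul_phi (α : ℝ) {x : ℝ} (hx : x < 1) :
    (1 - x - α * x) * phi α x = (phi α x - x) + Cfun α x := by
  have h := add_one_mul_phi α hx
  unfold Cfun
  linear_combination (-x) * h

lemma four_mul_div_sq_mul_le_sq {a b c p : ℝ} (h : b * p = a + c) :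
    4 * (a / p ^ 2) * c ≤ b ^ 2 := by
  rcases eq_or_ne p 0 with rfl | hp
  · simpa using sq_nonneg b
  have hsq : b ^ 2 - 4 * (a / p ^ 2) * c = (b - 2 * c / p) ^ 2 := by
    rw [show a = b * p - c by linarith]
    field_simp
    ring
  linarith [sq_nonneg (b - 2 * c / p)]

lemma four_mul_Afun_mul_Cfun_le (α : ℝ) {x : ℝ} (hx : x < 1) :
    4 * Afun α x * Cfun α x ≤ (1 - x - α * x) ^ 2 :=
  four_mul_div_sq_mul_le_sq (one_sub_sub_mul_mul_phi α hx)

theorem discriminant_pos_general (α : ℝ) (hα₂ : α ≤ 0) (M : ℝ → ℝ)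
    (hpos : ∀ x ∈ Ioo (0 : ℝ) 1, 0 < M x)
    (hd' : ∀ x ∈ Ioo (0 : ℝ) 1, 0 < deriv M x)
    (x : ℝ) (hx : x ∈ Ioo (0 : ℝ) 1) :
    0 < (Bfun α M x) ^ 2 - 4 * Afun α x * Cfun α x := by
  obtain ⟨hx0, hx1⟩ := hx
  have hb₀ : 0 < 1 - x - α * x := by nlinarith
  have hε : 0 < x * (1 - x) * deriv M x / M x :=
    div_pos (mul_pos (mul_pos hx0 (by linarith)) (hd' x ⟨hx0, hx1⟩)) (hpos x ⟨hx0, hx1⟩)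
  have hAC := four_mul_Afun_mul_Cfun_le α hx1
  have hB : (1 - x - α * x) ^ 2 < Bfun α M x ^ 2 := by
    unfold Bfun
    gcongr
    linarith
  linarith

/-- For `-2 ≤ α ≤ 0` and `M` positive differentiable on `(0,1)` with `M' > 0`,
one has `B² - 4AC > 0` on `(0,1)`. -/
theorem discriminant_pos (α : ℝ) (hα₁ : -2 ≤ α) (hα₂ : α ≤ 0) (M : ℝ → ℝ)
    (hpos : ∀ x ∈ Ioo (0 : ℝ) 1, 0 < M x)
    (hd : ∀ x ∈ Ioo (0 : ℝ) 1, DifferentiableAt ℝ M x)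
    (hd' : ∀ x ∈ Ioo (0 : ℝ) 1, 0 < deriv M x)
    (x : ℝ) (hx : x ∈ Ioo (0 : ℝ) 1) :
    0 < (Bfun α M x) ^ 2 - 4 * Afun α x * Cfun α x :=
  discriminant_pos_general α hα₂ M hpos hd' x hx
end

section
/- Let −2 ≤ α < 0 and let M be a positive differentiable function on (0,1) with M′(x) > 0 for all x ∈ (0,1). Then for every x ∈ (0,1), ( B(x) + √(B(x)² − 4A(x)C(x)) ) / (2A(x)) ≥ φ(x). -/
/-!
Integrating `φ' = (1 - x)^α` gives `(1 + α) φ = 1 - (1 - x)^(α+1)`, so `C = x - x(1 + α)φ`;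
with `Aφ² = φ - x` this collapses the quadratic `Ar² - Br + C` at `r = φ` to
`-φ · x(1 - x)M'/M ≤ 0`. As `A > 0` (because `(1 - t)^α > 1` for `α < 0`), `φ` lies below the
larger root.
-/

open Real Set

theorem le_quadratic_root_of_nonpos {a b c r : ℝ} (ha : 0 < a)
    (h : a * r ^ 2 - b * r + c ≤ 0) : r ≤ (b + √(b ^ 2 - 4 * a * c)) / (2 * a) := by
  rw [le_div_iff₀ (by positivity)]
  have : (2 * a * r - b) ^ 2 ≤ b ^ 2 - 4 * a * c := by nlinarith
  linarith [Real.le_sqrt_of_sq_le this]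

section phi

variable {α x : ℝ}

theorem one_add_mul_phi (hx : x < 1) : (1 + α) * phi α x = 1 - (1 - x) ^ (α + 1) := by
  rcases eq_or_ne α (-1) with rfl | hα
  · norm_num
  have hφ : phi α x = ∫ u in (1 - x)..1, u ^ α := by
    rw [phi, intervalIntegral.integral_comp_sub_left (fun u => u ^ α) 1, sub_zero]
  have h0 : (0 : ℝ) ∉ uIcc (1 - x) 1 := notMem_uIcc_of_lt (by linarith) one_pos
  have hα1 : α + 1 ≠ 0 := fun h => hα (by linarith)
  rw [hφ, integral_rpow (Or.inr ⟨hα, h0⟩), one_rpow]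
  field_simp
  ring

theorem lt_phi (hα : α < 0) (hx₀ : 0 < x) (hx₁ : x < 1) : x < phi α x := by
  have hcont : ContinuousOn (fun t : ℝ => (1 - t) ^ α) (Icc 0 x) :=
    ContinuousOn.rpow_const (by fun_prop) fun t ht => Or.inl (by linarith [ht.2])
  have hgt : ∀ t ∈ Ioc 0 x, 1 < (1 - t) ^ α := fun t ht =>
    one_lt_rpow_of_pos_of_lt_one_of_neg (by linarith [ht.2]) (by linarith [ht.1]) hα
  have := intervalIntegral.integral_lt_integral_of_continuousOn_of_le_of_exists_lt hx₀
    continuousOn_const hcont (fun t ht => (hgt t ht).le)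
    ⟨x, right_mem_Icc.2 hx₀.le, hgt x (right_mem_Ioc.2 hx₀)⟩
  simpa [phi] using this

theorem Afun_pos (hα : α < 0) (hx₀ : 0 < x) (hx₁ : x < 1) : 0 < Afun α x :=
  div_pos (sub_pos.2 (lt_phi hα hx₀ hx₁)) (pow_pos (hx₀.trans (lt_phi hα hx₀ hx₁)) 2)

theorem Afun_mul_phi_sq_sub_Bfun_mul_phi_add_Cfun (M : ℝ → ℝ) (hx : x < 1)
    (hφ : phi α x ≠ 0) :
    Afun α x * phi α x ^ 2 - Bfun α M x * phi α x + Cfun α x =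
      -(phi α x * (x * (1 - x) * deriv M x / M x)) := by
  have hA : Afun α x * phi α x ^ 2 = phi α x - x := by
    rw [Afun]
    field_simp
  have hC : Cfun α x = x - x * ((1 + α) * phi α x) := by
    rw [Cfun, one_add_mul_phi hx]
    ring
  rw [hA, hC, Bfun]
  ring

end phi

theorem root_ge_phi_general (α : ℝ) (hα₂ : α < 0) (M : ℝ → ℝ)
    (hpos : ∀ x ∈ Ioo (0 : ℝ) 1, 0 < M x)
    (hd' : ∀ x ∈ Ioo (0 : ℝ) 1, 0 < deriv M x)
    (x : ℝ) (hx : x ∈ Ioo (0 : ℝ) 1) :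
    phi α x ≤
      (Bfun α M x + Real.sqrt ((Bfun α M x) ^ 2 - 4 * Afun α x * Cfun α x)) /
        (2 * Afun α x) := by
  obtain ⟨hx₀, hx₁⟩ := hx
  have hφ : 0 < phi α x := hx₀.trans (lt_phi hα₂ hx₀ hx₁)
  have hMterm : 0 < x * (1 - x) * deriv M x / M x :=
    div_pos (mul_pos (mul_pos hx₀ (sub_pos.2 hx₁)) (hd' x ⟨hx₀, hx₁⟩)) (hpos x ⟨hx₀, hx₁⟩)
  refine le_quadratic_root_of_nonpos (Afun_pos hα₂ hx₀ hx₁) ?_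
  rw [Afun_mul_phi_sq_sub_Bfun_mul_phi_add_Cfun M hx₁ hφ.ne']
  exact neg_nonpos.2 (mul_pos hφ hMterm).le

/-- For `-2 ≤ α < 0` and `M` positive differentiable on `(0,1)` with `M' > 0`,
`(B + √(B² - 4AC))/(2A) ≥ φ(x)` on `(0,1)`. -/
theorem root_ge_phi (α : ℝ) (hα₁ : -2 ≤ α) (hα₂ : α < 0) (M : ℝ → ℝ)
    (hpos : ∀ x ∈ Ioo (0 : ℝ) 1, 0 < M x)
    (hd : ∀ x ∈ Ioo (0 : ℝ) 1, DifferentiableAt ℝ M x)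
    (hd' : ∀ x ∈ Ioo (0 : ℝ) 1, 0 < deriv M x)
    (x : ℝ) (hx : x ∈ Ioo (0 : ℝ) 1) :
    phi α x ≤
      (Bfun α M x + Real.sqrt ((Bfun α M x) ^ 2 - 4 * Afun α x * Cfun α x)) /
        (2 * Afun α x) :=
  root_ge_phi_general α hα₂ M hpos hd' x hx
end
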